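/- Let {Σ_N} be an arbitrary sequence of regular strategy profiles on a sequence of instances of the binary voting model. If the fidelities satisfy lim_{N→∞} A(Σ_N) = 1, then there is a sequence ε_N → 0 of nonnegative reals such that for every N the profile Σ_N is an ε_N-strong Bayes Nash Equilibrium. -/

import Mathlib

namespace Voting

/-- The two world states: `L` (low) and `H` (high). -/
inductive WState : Type
  | L
  | H
deriving DecidableEq

instance : Fintype WState :=
  ⟨{WState.L, WState.H}, fun x => by cases x <;> simp⟩

/-- The two alternatives: `A` (accept) and `R` (reject). -/
inductive Alt : Type
  | A
  | R
deriving DecidableEq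

instance : Fintype Alt :=
  ⟨{Alt.A, Alt.R}, fun x => by cases x <;> simp⟩

/-- The shared parameters of a binary voting instance. -/
structure BParams where
  /-- majority threshold -/
  μ : ℝ
  hμ0 : 0 < μ
  hμ1 : μ < 1
  /-- prior of state `L` -/
  PL : ℝ
  /-- prior of state `H` -/
  PH : ℝ
  hPL : 0 < PL
  hPH : 0 < PH
  hPsum : PL + PH = 1
  /-- `Psig s ω` : probability of signal `s` in state `ω`; `true` is the signal `h`,
  `false` is the signal `l`. -/
  Psig : Bool → WState → ℝ
  hPsig : ∀ s ω, 0 ≤ Psig s ω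
  hPsigsum : ∀ ω, Psig false ω + Psig true ω = 1
  /-- positive correlation: `P_{hH} > P_{hL}` -/
  hcorr : Psig true WState.L < Psig true WState.H
  /-- upper bound of the utility functions -/
  B : ℕ
  hB : 0 < B

/-- A binary voting instance with `N` agents. -/
structure BInstance extends BParams where
  N : ℕ
  /-- the utility function of each agent -/
  u : Fin N → WState → Alt → ℕ
  hub : ∀ n ω a, u n ω a ≤ B
  huA : ∀ n, u n WState.L Alt.A < u n WState.H Alt.A
  huR : ∀ n, u n WState.H Alt.R < u n WState.L Alt.R

/-- A (mixed) strategy profile: for each agent, the probability of voting for `A`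
upon each signal. -/
abbrev Profile (I : BInstance) : Type := Fin I.N → Bool → ℝ

/-- All coordinates of the profile are genuine probabilities. -/
def ValidProfile (I : BInstance) (sp : Profile I) : Prop :=
  ∀ n s, 0 ≤ sp n s ∧ sp n s ≤ 1

/-- Probability that agent `n` votes for `A`, conditioned on the world state `ω`. -/
noncomputable def pA (I : BInstance) (sp : Profile I) (n : Fin I.N) (ω : WState) : ℝ :=
  I.Psig false ω * sp n false + I.Psig true ω * sp n true

open Finset in
/-- `lambdaA I sp ω` : the probability that at least `μ·N` agents vote for `A`,
conditioned on the world state `ω` (conditionally on the state, the votes are independent,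
agent `n` voting for `A` with probability `pA I sp n ω`). -/
noncomputable def lambdaA (I : BInstance) (sp : Profile I) (ω : WState) : ℝ :=
  ∑ v : Fin I.N → Bool,
    if I.μ * (I.N : ℝ) ≤ ((univ.filter fun n => v n = true).card : ℝ) then
      ∏ n, (if v n = true then pA I sp n ω else 1 - pA I sp n ω)
    else 0

/-- The fidelity of a strategy profile: the probability that the informed majority
decision is reached. -/
noncomputable def fid (I : BInstance) (sp : Profile I) : ℝ :=
  I.PL * (1 - lambdaA I sp WState.L) + I.PH * lambdaA I sp WState.H

/-- The ex-ante expected utility of agent `n` under profile `sp`. -/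
noncomputable def ut (I : BInstance) (sp : Profile I) (n : Fin I.N) : ℝ :=
  I.PL * (lambdaA I sp WState.L * (I.u n WState.L Alt.A : ℝ)
      + (1 - lambdaA I sp WState.L) * (I.u n WState.L Alt.R : ℝ))
    + I.PH * (lambdaA I sp WState.H * (I.u n WState.H Alt.A : ℝ)
      + (1 - lambdaA I sp WState.H) * (I.u n WState.H Alt.R : ℝ))

/-- A friendly agent prefers `A` in both states. -/
def Friendly (I : BInstance) (n : Fin I.N) : Prop :=
  ∀ ω, I.u n ω Alt.R < I.u n ω Alt.A

/-- An unfriendly agent prefers `R` in both states. -/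
def Unfriendly (I : BInstance) (n : Fin I.N) : Prop :=
  ∀ ω, I.u n ω Alt.A < I.u n ω Alt.R

/-- A contingent agent prefers `A` in state `H` and `R` in state `L`. -/
def Contingent (I : BInstance) (n : Fin I.N) : Prop :=
  I.u n WState.H Alt.R < I.u n WState.H Alt.A ∧ I.u n WState.L Alt.A < I.u n WState.L Alt.R

/-- A profile is regular if every friendly agent always votes for `A` and every
unfriendly agent always votes for `R`. -/
def Regular (I : BInstance) (sp : Profile I) : Prop :=
  (∀ n, Friendly I n → ∀ s, sp n s = 1) ∧ (∀ n, Unfriendly I n → ∀ s, sp n s = 0)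

/-- `ε`-strong Bayes Nash Equilibrium: no coalition `D` can deviate so that no member
is worse off and some member gains more than `ε`. -/
def IsEpsBNE (I : BInstance) (sp : Profile I) (ε : ℝ) : Prop :=
  ¬ ∃ (D : Set (Fin I.N)) (sp' : Profile I),
      ValidProfile I sp' ∧
      (∀ n, n ∉ D → sp' n = sp n) ∧
      (∀ n ∈ D, ut I sp n ≤ ut I sp' n) ∧
      (∃ n ∈ D, ut I sp n + ε < ut I sp' n)

/-- Number of friendly agents. -/
noncomputable def friendlyCount (I : BInstance) : ℕ := {n | Friendly I n}.ncard

/-- Number of unfriendly agents. -/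
noncomputable def unfriendlyCount (I : BInstance) : ℕ := {n | Unfriendly I n}.ncard

/-- Number of contingent agents. -/
noncomputable def contingentCount (I : BInstance) : ℕ := {n | Contingent I n}.ncard

/-- A sequence of binary voting instances sharing the same parameters, in which the
instance indexed by `N` has `N` agents. -/
structure BSeq where
  params : BParams
  inst : ℕ → BInstance
  hN : ∀ N, (inst N).N = N
  hshare : ∀ N, (inst N).toBParams = params

/-- A sequence of binary voting instances with fixed approximate fractions
`(αF, αU, αC)` of friendly, unfriendly and contingent agents. -/
structure BSeqFrac extends BSeq where
  αF : ℝ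
  αU : ℝ
  αC : ℝ
  hαF0 : 0 ≤ αF
  hαU0 : 0 ≤ αU
  hαC0 : 0 ≤ αC
  hαsum : αF + αU + αC = 1
  hαFμ : αF < params.μ
  hαUμ : αU < 1 - params.μ
  hNF : ∀ N : ℕ, friendlyCount (inst N) = ⌊αF * (N : ℝ)⌋₊
  hNU : ∀ N : ℕ, unfriendlyCount (inst N) = ⌊αU * (N : ℝ)⌋₊
  hNC : ∀ N : ℕ, contingentCount (inst N) = N - ⌊αF * (N : ℝ)⌋₊ - ⌊αU * (N : ℝ)⌋₊

section AuxBern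
open Finset

noncomputable def bern (N : ℕ) (m : ℝ) (p : Fin N → ℝ) : ℝ :=
  ∑ v : Fin N → Bool,
    if m ≤ ((univ.filter fun n => v n = true).card : ℝ) then
      ∏ n, (if v n = true then p n else 1 - p n)
    else 0

lemma sum_split (N : ℕ) (k : Fin N) (f : (Fin N → Bool) → ℝ) :
    ∑ v : Fin N → Bool, f v
      = ∑ v ∈ univ.filter (fun v => v k = true), (f v + f (Function.update v k false)) := by
  rw [Finset.sum_add_distrib]
  rw [← Finset.sum_filter_add_sum_filter_not univ (fun v => v k = true) f]
  congr 1
  refine Finset.sum_bij' (fun v _ => Function.update v k true)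
    (fun v _ => Function.update v k false) ?_ ?_ ?_ ?_ ?_
  · intro v hv
    simp only [mem_filter, mem_univ, true_and] at hv ⊢
    simp [Function.update]
  · intro v hv
    simp only [mem_filter, mem_univ, true_and, Bool.not_eq_true] at hv ⊢
    simp [Function.update]
  · intro v hv
    simp only [mem_filter, mem_univ, true_and, Bool.not_eq_true] at hv
    funext i
    by_cases hi : i = k
    · subst hi; simp [Function.update, hv]
    · simp [Function.update, hi]
  · intro v hv
    simp only [mem_filter, mem_univ, true_and] at hv
    funext i
    by_cases hi : i = k
    · subst hi; simp [Function.update, hv]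
    · simp [Function.update, hi]
  · intro v hv
    congr 1
    funext i
    by_cases hi : i = k
    · subst hi
      simp only [mem_filter, mem_univ, true_and, Bool.not_eq_true] at hv
      simp [Function.update, hv]
    · simp [Function.update, hi]

lemma bern_mono_one (N : ℕ) (m : ℝ) (p q : Fin N → ℝ) (k : Fin N)
    (hp : ∀ n, 0 ≤ p n ∧ p n ≤ 1)
    (hle : p k ≤ q k) (hoth : ∀ n, n ≠ k → p n = q n) :
    bern N m p ≤ bern N m q := by
  unfold bern
  rw [sum_split N k, sum_split N k]
  apply Finset.sum_le_sum
  intro v hv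
  simp only [mem_filter, mem_univ, true_and] at hv
  have hprod : ∀ r : Fin N → ℝ,
      ∏ n, (if v n = true then r n else 1 - r n)
        = r k * ∏ n ∈ univ.erase k, (if v n = true then r n else 1 - r n) := by
    intro r
    rw [← Finset.mul_prod_erase univ _ (mem_univ k), hv]
    simp
  have hupd : ∀ r : Fin N → ℝ,
      ∏ n, (if Function.update v k false n = true then r n else 1 - r n)
        = (1 - r k) * ∏ n ∈ univ.erase k, (if v n = true then r n else 1 - r n) := by
    intro r
    rw [← Finset.mul_prod_erase univ _ (mem_univ k)]
    simp only [Function.update_self]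
    rw [if_neg (by simp)]
    congr 1
    exact Finset.prod_congr rfl fun n hn => by rw [Function.update_of_ne (mem_erase.mp hn).1]
  have hRq : ∏ n ∈ univ.erase k, (if v n = true then q n else 1 - q n)
      = ∏ n ∈ univ.erase k, (if v n = true then p n else 1 - p n) := by
    apply Finset.prod_congr rfl
    intro n hn
    rw [hoth n (mem_erase.mp hn).1]
  set R := ∏ n ∈ univ.erase k, (if v n = true then p n else 1 - p n) with hRdef
  have hR0 : 0 ≤ R := by
    apply Finset.prod_nonneg
    intro n _
    split
    · exact (hp n).1
    · linarith [(hp n).2]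
  have hcard : ((univ.filter fun n => Function.update v k false n = true).card : ℝ)
      ≤ ((univ.filter fun n => v n = true).card : ℝ) := by
    have hsub : (univ.filter fun n => Function.update v k false n = true)
        ⊆ (univ.filter fun n => v n = true) := by
      intro n hn
      simp only [mem_filter, mem_univ, true_and] at hn ⊢
      by_cases hnk : n = k
      · subst hnk; simp at hn
      · rwa [Function.update_of_ne hnk] at hn
    exact_mod_cast Finset.card_le_card hsub
  rw [hprod p, hprod q, hupd p, hupd q, hRq]
  by_cases h1 : m ≤ ((univ.filter fun n => v n = true).card : ℝ)
  · by_cases h2 : m ≤ ((univ.filter fun n => Function.update v k false n = true).card : ℝ)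
    · rw [if_pos h1, if_pos h2, if_pos h1, if_pos h2]
      ring_nf
      exact le_rfl
    · rw [if_pos h1, if_neg h2, if_pos h1, if_neg h2]
      have := mul_le_mul_of_nonneg_right hle hR0
      linarith
  · have h2 : ¬ m ≤ ((univ.filter fun n => Function.update v k false n = true).card : ℝ) := by
      intro h; exact h1 (le_trans h hcard)
    rw [if_neg h1, if_neg h2, if_neg h1, if_neg h2]

lemma bern_nonneg (N : ℕ) (m : ℝ) (p : Fin N → ℝ) (hp : ∀ n, 0 ≤ p n ∧ p n ≤ 1) :
    0 ≤ bern N m p := by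
  apply Finset.sum_nonneg
  intro v _
  split
  · exact Finset.prod_nonneg fun n _ => by
      split
      · exact (hp n).1
      · linarith [(hp n).2]
  · exact le_rfl

lemma bern_le_one (N : ℕ) (m : ℝ) (p : Fin N → ℝ) (hp : ∀ n, 0 ≤ p n ∧ p n ≤ 1) :
    bern N m p ≤ 1 := by
  have htot : ∑ v : Fin N → Bool, ∏ n, (if v n = true then p n else 1 - p n) = 1 := by
    have h := Finset.prod_univ_sum (fun _ : Fin N => (univ : Finset Bool))
      (fun n b => if b = true then p n else 1 - p n)
    simp only [Fintype.piFinset_univ] at h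
    rw [← h]
    simp
  rw [← htot]
  apply Finset.sum_le_sum
  intro v _
  split
  · exact le_rfl
  · exact Finset.prod_nonneg fun n _ => by
      split
      · exact (hp n).1
      · linarith [(hp n).2]

lemma bern_mono (N : ℕ) (m : ℝ) (p q : Fin N → ℝ)
    (hp : ∀ n, 0 ≤ p n ∧ p n ≤ 1) (hq : ∀ n, 0 ≤ q n ∧ q n ≤ 1)
    (hle : ∀ n, p n ≤ q n) : bern N m p ≤ bern N m q := by
  have key : ∀ s : Finset (Fin N),
      bern N m p ≤ bern N m (fun n => if n ∈ s then q n else p n) := by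
    intro s
    induction s using Finset.induction_on with
    | empty => simp
    | @insert k s hk ih =>
      refine le_trans ih (bern_mono_one N m _ _ k ?_ ?_ ?_)
      · intro n; split
        · exact hq n
        · exact hp n
      · simp [hk, hle k]
      · intro n hn
        by_cases hns : n ∈ s
        · simp [hns, Finset.mem_insert, hns]
        · simp [hns, Finset.mem_insert, hn, hns]
  have := key univ
  simpa using this

end AuxBern

section MainArgument
open Finset

lemma lambdaA_eq_bern (I : BInstance) (sp : Profile I) (ω : WState) :
    lambdaA I sp ω = bern I.N (I.μ * I.N) (fun n => pA I sp n ω) := rfl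

lemma pA_mem (I : BInstance) {sp : Profile I} (hval : ValidProfile I sp) (n : Fin I.N)
    (ω : WState) : 0 ≤ pA I sp n ω ∧ pA I sp n ω ≤ 1 := by
  obtain ⟨h0f, h1f⟩ := hval n false
  obtain ⟨h0t, h1t⟩ := hval n true
  have hf := I.hPsig false ω
  have ht := I.hPsig true ω
  have hs := I.hPsigsum ω
  unfold pA
  constructor
  · exact add_nonneg (mul_nonneg hf h0f) (mul_nonneg ht h0t)
  · linarith [mul_le_mul_of_nonneg_left h1f hf, mul_le_mul_of_nonneg_left h1t ht]

lemma lambdaA_mem (I : BInstance) {sp : Profile I} (hval : ValidProfile I sp) (ω : WState) :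
    0 ≤ lambdaA I sp ω ∧ lambdaA I sp ω ≤ 1 := by
  rw [lambdaA_eq_bern]
  exact ⟨bern_nonneg _ _ _ (fun n => pA_mem I hval n ω),
    bern_le_one _ _ _ (fun n => pA_mem I hval n ω)⟩

lemma lambdaA_mono (I : BInstance) {sp sp' : Profile I} (hval : ValidProfile I sp)
    (hval' : ValidProfile I sp') (ω : WState) (h : ∀ n, pA I sp n ω ≤ pA I sp' n ω) :
    lambdaA I sp ω ≤ lambdaA I sp' ω := by
  rw [lambdaA_eq_bern, lambdaA_eq_bern]
  exact bern_mono _ _ _ _ (fun n => pA_mem I hval n ω) (fun n => pA_mem I hval' n ω) h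

lemma fid_le_one (I : BInstance) {sp : Profile I} (hval : ValidProfile I sp) :
    fid I sp ≤ 1 := by
  obtain ⟨hL0, hL1⟩ := lambdaA_mem I hval WState.L
  obtain ⟨hH0, hH1⟩ := lambdaA_mem I hval WState.H
  unfold fid
  linarith [mul_nonneg I.hPL.le hL0, mul_nonneg I.hPH.le (show (0:ℝ) ≤ 1 - lambdaA I sp WState.H by linarith), I.hPsum, I.hPL.le, I.hPH.le]

set_option maxHeartbeats 2000000 in
lemma main_eps (I : BInstance) (sp : Profile I) (hval : ValidProfile I sp) (hreg : Regular I sp)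
    (htri : ∀ n, Friendly I n ∨ Unfriendly I n ∨ Contingent I n) :
    IsEpsBNE I sp (((I.B : ℝ) ^ 2 + (I.B : ℝ)) * (1 - fid I sp)) := by
  rintro ⟨D, sp', hval', hagree, himp, ns, hnsD, hgain⟩
  set B : ℝ := (I.B : ℝ) with hBdef
  have hB1 : (1 : ℝ) ≤ B := by rw [hBdef]; exact_mod_cast I.hB
  set lL := lambdaA I sp WState.L with hlLdef
  set lH := lambdaA I sp WState.H with hlHdef
  set lL' := lambdaA I sp' WState.L with hlLdef'
  set lH' := lambdaA I sp' WState.H with hlHdef'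
  set η := 1 - fid I sp with hηdef
  have hlL0 : 0 ≤ lL := (lambdaA_mem I hval WState.L).1
  have hlL1 : lL ≤ 1 := (lambdaA_mem I hval WState.L).2
  have hlH0 : 0 ≤ lH := (lambdaA_mem I hval WState.H).1
  have hlH1 : lH ≤ 1 := (lambdaA_mem I hval WState.H).2
  have hlL0' : 0 ≤ lL' := (lambdaA_mem I hval' WState.L).1
  have hlL1' : lL' ≤ 1 := (lambdaA_mem I hval' WState.L).2
  have hlH0' : 0 ≤ lH' := (lambdaA_mem I hval' WState.H).1
  have hlH1' : lH' ≤ 1 := (lambdaA_mem I hval' WState.H).2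
  clear_value B lL lH lL' lH'
  have hη : η = I.PL * lL + I.PH * (1 - lH) := by
    rw [hηdef, hlLdef, hlHdef]
    unfold fid
    have := I.hPsum
    linarith [this]
  have hη0 : 0 ≤ η := by
    rw [hη]
    exact add_nonneg (mul_nonneg I.hPL.le hlL0) (mul_nonneg I.hPH.le (by linarith))
  have hPLlL : I.PL * lL ≤ η := by
    rw [hη]
    linarith [mul_nonneg I.hPH.le (show (0:ℝ) ≤ 1 - lH by linarith)]
  have hPHlH : I.PH * (1 - lH) ≤ η := by
    rw [hη]
    linarith [mul_nonneg I.hPL.le hlL0]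
  set x := I.PL * (lL' - lL) with hxdef
  set y := I.PH * (lH - lH') with hydef
  clear_value η x y
  have hxlb : -η ≤ x := by
    rw [hxdef]
    linarith [mul_nonneg I.hPL.le hlL0', hPLlL]
  have hylb : -η ≤ y := by
    rw [hydef]
    linarith [mul_nonneg I.hPH.le (show (0:ℝ) ≤ 1 - lH' by linarith), hPHlH]
  set a : Fin I.N → ℝ := fun n => (I.u n WState.L Alt.A : ℝ) - (I.u n WState.L Alt.R : ℝ)
    with hadef
  set b : Fin I.N → ℝ := fun n => (I.u n WState.H Alt.A : ℝ) - (I.u n WState.H Alt.R : ℝ)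
    with hbdef
  clear_value a b
  have hgap : ∀ n, a n + 2 ≤ b n := by
    intro n
    have h1' : ((I.u n WState.L Alt.A : ℕ) : ℝ) + 1 ≤ ((I.u n WState.H Alt.A : ℕ) : ℝ) := by
      exact_mod_cast Nat.succ_le_of_lt (I.huA n)
    have h2' : ((I.u n WState.H Alt.R : ℕ) : ℝ) + 1 ≤ ((I.u n WState.L Alt.R : ℕ) : ℝ) := by
      exact_mod_cast Nat.succ_le_of_lt (I.huR n)
    simp only [hadef, hbdef]
    linarith
  have hbound : ∀ n, -B ≤ a n ∧ a n ≤ B ∧ -B ≤ b n ∧ b n ≤ B := by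
    intro n
    have c1 : ((I.u n WState.L Alt.A : ℕ) : ℝ) ≤ B := by
      rw [hBdef]; exact_mod_cast I.hub n WState.L Alt.A
    have c2 : ((I.u n WState.L Alt.R : ℕ) : ℝ) ≤ B := by
      rw [hBdef]; exact_mod_cast I.hub n WState.L Alt.R
    have c3 : ((I.u n WState.H Alt.A : ℕ) : ℝ) ≤ B := by
      rw [hBdef]; exact_mod_cast I.hub n WState.H Alt.A
    have c4 : ((I.u n WState.H Alt.R : ℕ) : ℝ) ≤ B := by
      rw [hBdef]; exact_mod_cast I.hub n WState.H Alt.R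
    have d1 : (0:ℝ) ≤ ((I.u n WState.L Alt.A : ℕ) : ℝ) := Nat.cast_nonneg _
    have d2 : (0:ℝ) ≤ ((I.u n WState.L Alt.R : ℕ) : ℝ) := Nat.cast_nonneg _
    have d3 : (0:ℝ) ≤ ((I.u n WState.H Alt.A : ℕ) : ℝ) := Nat.cast_nonneg _
    have d4 : (0:ℝ) ≤ ((I.u n WState.H Alt.R : ℕ) : ℝ) := Nat.cast_nonneg _
    simp only [hadef, hbdef]
    refine ⟨by linarith, by linarith, by linarith, by linarith⟩
  have hsignF : ∀ n, Friendly I n → 1 ≤ a n := by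
    intro n hF
    have h' : ((I.u n WState.L Alt.R : ℕ) : ℝ) + 1 ≤ ((I.u n WState.L Alt.A : ℕ) : ℝ) := by
      exact_mod_cast Nat.succ_le_of_lt (hF WState.L)
    simp only [hadef]
    linarith
  have hsignU : ∀ n, Unfriendly I n → b n ≤ -1 := by
    intro n hU
    have h' : ((I.u n WState.H Alt.A : ℕ) : ℝ) + 1 ≤ ((I.u n WState.H Alt.R : ℕ) : ℝ) := by
      exact_mod_cast Nat.succ_le_of_lt (hU WState.H)
    simp only [hbdef]
    linarith
  have hsignC : ∀ n, Contingent I n → a n ≤ -1 ∧ 1 ≤ b n := by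
    intro n hC
    have h1' : ((I.u n WState.L Alt.A : ℕ) : ℝ) + 1 ≤ ((I.u n WState.L Alt.R : ℕ) : ℝ) := by
      exact_mod_cast Nat.succ_le_of_lt hC.2
    have h2' : ((I.u n WState.H Alt.R : ℕ) : ℝ) + 1 ≤ ((I.u n WState.H Alt.A : ℕ) : ℝ) := by
      exact_mod_cast Nat.succ_le_of_lt hC.1
    simp only [hadef, hbdef]
    exact ⟨by linarith, by linarith⟩
  have hut : ∀ n, ut I sp' n - ut I sp n = x * a n - y * b n := by
    intro n
    simp only [hxdef, hydef, hadef, hbdef, hlLdef, hlHdef, hlLdef', hlHdef']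
    unfold ut
    ring
  have hmem : ∀ n ∈ D, 0 ≤ x * a n - y * b n := by
    intro n hn
    have h := himp n hn
    have h2 := hut n
    linarith
  have hg : (B ^ 2 + B) * η < x * a ns - y * b ns := by
    have h2 := hut ns
    linarith [hgain]
  have hB2pos : (0:ℝ) ≤ B ^ 2 + B := by linarith [hB1, sq_nonneg B]
  have hB2B : (0:ℝ) ≤ B ^ 2 - B := by
    linarith [mul_le_mul_of_nonneg_left hB1 (show (0:ℝ) ≤ B by linarith)]
  have hraise : lL < lL' → ∃ n ∈ D, ¬ Friendly I n := by
    intro hlt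
    have hnall : ¬ ∀ n, pA I sp' n WState.L ≤ pA I sp n WState.L := by
      intro hall
      have h2 := lambdaA_mono I hval' hval WState.L hall
      rw [← hlLdef, ← hlLdef'] at h2
      linarith
    push_neg at hnall
    obtain ⟨n, hn⟩ := hnall
    refine ⟨n, ?_, ?_⟩
    · by_contra hD
      have heq : pA I sp' n WState.L = pA I sp n WState.L := by
        unfold pA; rw [hagree n hD]
      linarith
    · intro hF
      have h1 : pA I sp n WState.L = 1 := by
        unfold pA
        rw [hreg.1 n hF false, hreg.1 n hF true]
        linarith [I.hPsigsum WState.L]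
      have h2 := (pA_mem I hval' n WState.L).2
      linarith
  have hlower : lH' < lH → ∃ n ∈ D, ¬ Unfriendly I n := by
    intro hlt
    have hnall : ¬ ∀ n, pA I sp n WState.H ≤ pA I sp' n WState.H := by
      intro hall
      have h2 := lambdaA_mono I hval hval' WState.H hall
      rw [← hlHdef, ← hlHdef'] at h2
      linarith
    push_neg at hnall
    obtain ⟨n, hn⟩ := hnall
    refine ⟨n, ?_, ?_⟩
    · by_contra hD
      have heq : pA I sp' n WState.H = pA I sp n WState.H := by
        unfold pA; rw [hagree n hD]
      linarith
    · intro hU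
      have h1 : pA I sp n WState.H = 0 := by
        unfold pA
        rw [hreg.2 n hU false, hreg.2 n hU true]
        ring
      have h2 := (pA_mem I hval' n WState.H).1
      linarith
  have hyb : ∀ n, 0 ≤ b n → -(y * b n) ≤ η * B := by
    intro n h
    have A1 : (-y) * b n ≤ η * b n :=
      mul_le_mul_of_nonneg_right (by linarith [hylb]) h
    have A2 : η * b n ≤ η * B := mul_le_mul_of_nonneg_left (hbound n).2.2.2 hη0
    linarith [A1, A2]
  have hxa : ∀ n, a n ≤ 0 → x * a n ≤ η * B := by
    intro n h
    have A1 : (-x) * (-(a n)) ≤ η * (-(a n)) :=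
      mul_le_mul_of_nonneg_right (by linarith [hxlb]) (by linarith)
    have A2 : η * (-(a n)) ≤ η * B :=
      mul_le_mul_of_nonneg_left (by linarith [(hbound n).1]) hη0
    linarith [A1, A2]
  rcases htri ns with hF | hU | hC
  · -- friendly gainer
    have ha1 := hsignF ns hF
    have hgapns := hgap ns
    rcases le_or_gt x 0 with hx | hx
    · have h1 : x * a ns ≤ 0 := by
        linarith [mul_nonneg (neg_nonneg.2 hx) (show (0:ℝ) ≤ a ns by linarith)]
      have h2 : -(y * b ns) ≤ η * B := hyb ns (by linarith)
      linarith [h1, h2, hg, mul_nonneg (sq_nonneg B) hη0]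
    · have hx2 : 0 < I.PL * (lL' - lL) := by rw [← hxdef]; exact hx
      have hLlt : lL < lL' := by
        by_contra hcon
        push_neg at hcon
        linarith [mul_nonneg I.hPL.le (sub_nonneg.mpr hcon)]
      obtain ⟨n0, hn0D, hn0F⟩ := hraise hLlt
      have hm0 := hmem n0 hn0D
      rcases htri n0 with h0 | h0 | h0
      · exact hn0F h0
      · -- unfriendly blocker
        have hb0 := hsignU n0 h0
        have hgap0 := hgap n0
        have hy0 : 0 < y := by
          by_contra hcon
          push_neg at hcon
          have A : 0 ≤ x * (b n0 - 2 - a n0) := mul_nonneg hx.le (by linarith)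
          have A2 : 0 ≤ (-y) * (-(b n0)) := mul_nonneg (by linarith) (by linarith)
          have A3 : 0 ≤ x * (-1 - b n0) := mul_nonneg hx.le (by linarith)
          linarith [hm0, A, A2, A3, hx]
        have hyx : x < y := by
          by_contra hcon
          push_neg at hcon
          have A : 0 ≤ (x - y) * (-(b n0)) := mul_nonneg (by linarith) (by linarith)
          have A2 : 0 ≤ x * (b n0 - 2 - a n0) := mul_nonneg hx.le (by linarith)
          linarith [hm0, A, A2, hx]
        have hxy : y < x := by
          by_contra hcon
          push_neg at hcon
          have A : 0 ≤ (y - x) * a ns := mul_nonneg (by linarith) (by linarith)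
          have A2 : 0 ≤ y * (b ns - a ns - 2) := mul_nonneg hy0.le (by linarith)
          have A3 : 0 ≤ (B ^ 2 + B) * η := mul_nonneg hB2pos hη0
          linarith [hg, A, A2, A3, hy0]
        linarith
      · -- contingent blocker
        obtain ⟨ha0, hb0⟩ := hsignC n0 h0
        have hxB : x ≤ η * B := by
          have A : 0 ≤ x * (-(a n0) - 1) := mul_nonneg hx.le (by linarith)
          have Bh : -(y * b n0) ≤ η * B := hyb n0 (by linarith)
          linarith [A, hm0, Bh]
        have A : x * a ns ≤ x * B := mul_le_mul_of_nonneg_left (hbound ns).2.1 hx.le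
        have Bh : x * B ≤ (η * B) * B := mul_le_mul_of_nonneg_right hxB (by linarith)
        have Ch : -(y * b ns) ≤ η * B := hyb ns (by linarith)
        linarith [A, Bh, Ch, hg]
  · -- unfriendly gainer
    have hb1 := hsignU ns hU
    have hgapns := hgap ns
    rcases le_or_gt y 0 with hy | hy
    · have h1 : -(y * b ns) ≤ 0 := by
        linarith [mul_nonneg (neg_nonneg.2 hy) (show (0:ℝ) ≤ -(b ns) by linarith)]
      have h2 : x * a ns ≤ η * B := hxa ns (by linarith)
      linarith [h1, h2, hg, mul_nonneg (sq_nonneg B) hη0]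
    · have hy2 : 0 < I.PH * (lH - lH') := by rw [← hydef]; exact hy
      have hHlt : lH' < lH := by
        by_contra hcon
        push_neg at hcon
        linarith [mul_nonneg I.hPH.le (sub_nonneg.mpr hcon)]
      obtain ⟨n1, hn1D, hn1U⟩ := hlower hHlt
      have hm1 := hmem n1 hn1D
      rcases htri n1 with h1 | h1 | h1
      · -- friendly blocker
        have ha1 := hsignF n1 h1
        have hgap1 := hgap n1
        have hx0 : 0 < x := by
          by_contra hcon
          push_neg at hcon
          have A : 0 ≤ (-x) * a n1 := mul_nonneg (by linarith) (by linarith)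
          have A2 : 0 ≤ y * (b n1 - 1) := mul_nonneg hy.le (by linarith)
          linarith [hm1, A, A2, hy]
        have hxy : y < x := by
          by_contra hcon
          push_neg at hcon
          have A : 0 ≤ (y - x) * a n1 := mul_nonneg (by linarith) (by linarith)
          have A2 : 0 ≤ y * (b n1 - a n1 - 2) := mul_nonneg hy.le (by linarith)
          linarith [hm1, A, A2, hy]
        have hyx : x < y := by
          by_contra hcon
          push_neg at hcon
          have A : 0 ≤ (x - y) * (-(b ns)) := mul_nonneg (by linarith) (by linarith)
          have A2 : 0 ≤ x * (b ns - 2 - a ns) := mul_nonneg hx0.le (by linarith)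
          have A3 : 0 ≤ (B ^ 2 + B) * η := mul_nonneg hB2pos hη0
          linarith [hg, A, A2, A3, hx0]
        linarith
      · exact hn1U h1
      · -- contingent blocker
        obtain ⟨ha1, hb1'⟩ := hsignC n1 h1
        have hyB : y ≤ η * B := by
          have A : 0 ≤ y * (b n1 - 1) := mul_nonneg hy.le (by linarith)
          have Bh : x * a n1 ≤ η * B := hxa n1 (by linarith)
          linarith [A, hm1, Bh]
        have A : -(y * b ns) ≤ y * B := by
          have h2 := mul_le_mul_of_nonneg_left
            (show -(b ns) ≤ B by linarith [(hbound ns).2.2.1]) hy.le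
          linarith [h2]
        have Bh : y * B ≤ (η * B) * B := mul_le_mul_of_nonneg_right hyB (by linarith)
        have Ch : x * a ns ≤ η * B := hxa ns (by linarith)
        linarith [A, Bh, Ch, hg]
  · -- contingent gainer
    obtain ⟨hans, hbns⟩ := hsignC ns hC
    have h1 : x * a ns ≤ η * B := hxa ns (by linarith)
    have h2 : -(y * b ns) ≤ η * B := hyb ns (by linarith)
    linarith [h1, h2, hg, mul_nonneg hB2B hη0]

lemma trichotomy_of (S : BSeqFrac) (N : ℕ) :
    ∀ n : Fin (S.inst N).N,
      Friendly (S.inst N) n ∨ Unfriendly (S.inst N) n ∨ Contingent (S.inst N) n := by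
  intro n
  have hFU : Disjoint {m | Friendly (S.inst N) m} {m | Unfriendly (S.inst N) m} := by
    rw [Set.disjoint_left]
    rintro m hF hU
    exact absurd (hF WState.L) (not_lt.mpr (hU WState.L).le)
  have hFC : Disjoint {m | Friendly (S.inst N) m} {m | Contingent (S.inst N) m} := by
    rw [Set.disjoint_left]
    rintro m hF hC
    exact absurd (hF WState.L) (not_lt.mpr hC.2.le)
  have hUC : Disjoint {m | Unfriendly (S.inst N) m} {m | Contingent (S.inst N) m} := by
    rw [Set.disjoint_left]
    rintro m hU hC
    exact absurd (hU WState.H) (not_lt.mpr hC.1.le)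
  have hFUC : Disjoint ({m | Friendly (S.inst N) m} ∪ {m | Unfriendly (S.inst N) m})
      {m | Contingent (S.inst N) m} := Set.disjoint_union_left.mpr ⟨hFC, hUC⟩
  have hle : friendlyCount (S.inst N) + unfriendlyCount (S.inst N) ≤ (S.inst N).N := by
    calc friendlyCount (S.inst N) + unfriendlyCount (S.inst N)
        = ({m | Friendly (S.inst N) m} ∪ {m | Unfriendly (S.inst N) m}).ncard :=
          (Set.ncard_union_eq hFU (Set.toFinite _) (Set.toFinite _)).symm
      _ ≤ (Set.univ : Set (Fin (S.inst N).N)).ncard :=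
          Set.ncard_le_ncard (Set.subset_univ _) Set.finite_univ
      _ = (S.inst N).N := by
          simp [Set.ncard_univ, Nat.card_eq_fintype_card]
  have h1 := S.hNF N
  have h2 := S.hNU N
  have h3 := S.hNC N
  have h4 := S.hN N
  have hcard : ({m | Friendly (S.inst N) m} ∪ {m | Unfriendly (S.inst N) m}
      ∪ {m | Contingent (S.inst N) m}).ncard = (S.inst N).N := by
    rw [Set.ncard_union_eq hFUC (Set.toFinite _) (Set.toFinite _),
      Set.ncard_union_eq hFU (Set.toFinite _) (Set.toFinite _)]
    show friendlyCount (S.inst N) + unfriendlyCount (S.inst N)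
        + contingentCount (S.inst N) = (S.inst N).N
    rw [h1, h2, h4] at hle
    rw [h1, h2, h3, h4]
    omega
  have huniv : {m | Friendly (S.inst N) m} ∪ {m | Unfriendly (S.inst N) m}
      ∪ {m | Contingent (S.inst N) m} = (Set.univ : Set (Fin (S.inst N).N)) := by
    apply Set.eq_of_subset_of_ncard_le (Set.subset_univ _) _ Set.finite_univ
    rw [hcard]
    simp [Set.ncard_univ, Nat.card_eq_fintype_card]
  have hmem : n ∈ ({m | Friendly (S.inst N) m} ∪ {m | Unfriendly (S.inst N) m}
      ∪ {m | Contingent (S.inst N) m}) := by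
    rw [huniv]; exact Set.mem_univ n
  rcases hmem with (h | h) | h
  · exact Or.inl h
  · exact Or.inr (Or.inl h)
  · exact Or.inr (Or.inr h)

end MainArgument

/-- Theorem 2, first part. For a sequence of regular strategy profiles
on a sequence of instances, if the fidelities converge to `1`, then there is a sequence
`ε_N → 0` of nonnegative reals such that every `Σ_N` is an `ε_N`-strong BNE. -/
theorem high_fidelity_implies_eps_BNE (S : BSeqFrac)
    (sp : ∀ N : ℕ, Profile (S.inst N))
    (hval : ∀ N, ValidProfile (S.inst N) (sp N))
    (hreg : ∀ N, Regular (S.inst N) (sp N))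
    (hfid : Filter.Tendsto (fun N => fid (S.inst N) (sp N)) Filter.atTop (nhds 1)) :
    ∃ ε : ℕ → ℝ, (∀ N, 0 ≤ ε N) ∧ Filter.Tendsto ε Filter.atTop (nhds 0) ∧
      ∀ N, IsEpsBNE (S.inst N) (sp N) (ε N) := by
  refine ⟨fun N => ((S.params.B : ℝ) ^ 2 + (S.params.B : ℝ)) * (1 - fid (S.inst N) (sp N)),
    ?_, ?_, ?_⟩
  · intro N
    have hf1 : fid (S.inst N) (sp N) ≤ 1 := fid_le_one (S.inst N) (hval N)
    have hBp : (1:ℝ) ≤ (S.params.B : ℝ) := by exact_mod_cast S.params.hB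
    apply mul_nonneg (by linarith [hBp, sq_nonneg (S.params.B : ℝ)]) (by linarith)
  · have h0 : Filter.Tendsto (fun N => (1:ℝ) - fid (S.inst N) (sp N))
        Filter.atTop (nhds (1 - 1)) :=
      Filter.Tendsto.sub tendsto_const_nhds hfid
    have h := Filter.Tendsto.const_mul ((S.params.B : ℝ) ^ 2 + (S.params.B : ℝ)) h0
    simpa using h
  · intro N
    have hB : (S.inst N).B = S.params.B := by rw [← S.hshare N]
    have h := main_eps (S.inst N) (sp N) (hval N) (hreg N) (trichotomy_of S N)
    rw [hB] at h
    exact h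

end Voting
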